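/- arXiv:1402.6577 — 5 statements merged into one kernel-verified Lean document; each statement's English description precedes it below -/
import Mathlib

section
/- The alternating series ∑_{k=1}^∞ (-1)^k · ln(k)/k converges and equals γ·ln 2 - (1/2)(ln 2)², where γ is the Euler–Mascheroni constant. -/
/-! Pairing consecutive terms, and using `2 · ln(2j)/(2j) = ln 2 / j + ln j / j`, the even partial
sums are `S_{2N} = ln 2 · H_N - ∑_{k=N+1}^{2N} ln k / k`. Since `ln x / x` decreases for `x ≥ e`, the
block sum differs from `∫_N^{2N} ln x / x dx = (ln 2)² / 2 + ln 2 · ln N` by at most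
`ln N / N - ln (2N) / (2N) → 0`. Hence `S_{2N} = ln 2 · (H_N - ln N) - (ln 2)² / 2 + o(1)`, which tends
to `γ ln 2 - (ln 2)² / 2`, and the odd partial sums differ from the even ones by a vanishing term. -/

open Real Filter Finset

open scoped Topology

theorem tendsto_of_tendsto_two_mul_of_tendsto_two_mul_add_one {α : Type*} {u : ℕ → α}
    {l : Filter α} (h_even : Tendsto (fun n => u (2 * n)) atTop l)
    (h_odd : Tendsto (fun n => u (2 * n + 1)) atTop l) : Tendsto u atTop l := by
  intro s hs
  obtain ⟨a, ha⟩ := mem_atTop_sets.1 (h_even hs)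
  obtain ⟨b, hb⟩ := mem_atTop_sets.1 (h_odd hs)
  refine mem_atTop_sets.2 ⟨2 * (a + b), fun n hn => ?_⟩
  obtain ⟨k, rfl | rfl⟩ := Nat.even_or_odd' n
  · exact ha k (by omega)
  · exact hb k (by omega)

theorem sum_range_two_mul_neg_one_pow_mul {R : Type*} [CommRing R] (f : ℕ → R) (N : ℕ) :
    ∑ k ∈ range (2 * N), (-1) ^ (k + 1) * f (k + 1)
      = 2 * ∑ k ∈ range N, f (2 * (k + 1)) - ∑ k ∈ range (2 * N), f (k + 1) := by
  induction N with
  | zero => simp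
  | succ N ih =>
    rw [sum_range_succ (fun k => f (2 * (k + 1))), show 2 * (N + 1) = 2 * N + 1 + 1 by ring,
      sum_range_succ, sum_range_succ, ih, sum_range_succ (fun k => f (k + 1)),
      sum_range_succ (fun k => f (k + 1))]
    simp only [pow_succ, pow_mul]
    norm_num
    ring

theorem two_mul_log_div_self_two_mul (x : ℝ) :
    2 * (log (2 * x) / (2 * x)) = log 2 / x + log x / x := by
  rcases eq_or_ne x 0 with rfl | hx
  · simp
  · rw [log_mul two_ne_zero hx]
    field_simp

theorem integral_log_div_self {a b : ℝ} (ha : 0 < a) (hb : 0 < b) :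
    ∫ x in a..b, log x / x = (log b ^ 2 - log a ^ 2) / 2 := by
  have hpos : ∀ x ∈ Set.uIcc a b, x ≠ 0 := fun x hx =>
    (lt_of_lt_of_le (lt_min ha hb) hx.1).ne'
  rw [intervalIntegral.integral_eq_sub_of_hasDerivAt (f := fun x => log x ^ 2 / 2)]
  · ring
  · intro x hx
    refine (((hasDerivAt_log (hpos x hx)).fun_pow 2).div_const 2).congr_deriv ?_
    norm_num
    ring
  · exact (continuousOn_log.mono fun x hx => hpos x hx).div continuousOn_id hpos
      |>.intervalIntegrable

theorem AntitoneOn.integral_le_sum_Ico_succ_add {f : ℝ → ℝ} {a b : ℕ} (hab : a ≤ b)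
    (hf : AntitoneOn f (Set.Icc a b)) :
    ∫ x in a..b, f x ≤ ∑ i ∈ Ico a b, f ↑(i + 1) + (f a - f b) := by
  have h_telescope := sum_Ico_sub (fun i : ℕ => f i) hab
  simp only [sum_sub_distrib] at h_telescope
  linarith [hf.integral_le_sum_Ico hab]

theorem tendsto_integral_sub_sum_Ico_two_mul {f : ℝ → ℝ} {c : ℝ} (hf : AntitoneOn f (Set.Ici c))
    (hlim : Tendsto f atTop (𝓝 0)) :
    Tendsto (fun N : ℕ => (∫ x in (N : ℝ)..((2 * N : ℕ) : ℝ), f x)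
      - ∑ i ∈ Ico N (2 * N), f ↑(i + 1)) atTop (𝓝 0) := by
  have h_gap : Tendsto (fun N : ℕ => f N - f ↑(2 * N)) atTop (𝓝 0) := by
    have h := hlim.comp tendsto_natCast_atTop_atTop
    simpa using h.sub (h.comp (tendsto_id.const_mul_atTop' two_pos))
  refine tendsto_of_tendsto_of_tendsto_of_le_of_le' tendsto_const_nhds h_gap ?_ ?_
  all_goals
    filter_upwards [eventually_ge_atTop ⌈c⌉₊] with N hN
    have hN2 : N ≤ 2 * N := by omega
    have hmono : AntitoneOn f (Set.Icc (N : ℝ) ((2 * N : ℕ) : ℝ)) :=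
      hf.mono fun x hx => (Nat.ceil_le.1 hN).trans hx.1
  · linarith [hmono.sum_le_integral_Ico hN2]
  · linarith [hmono.integral_le_sum_Ico_succ_add hN2]

theorem tendsto_log_div_self_atTop : Tendsto (fun x : ℝ => log x / x) atTop (𝓝 0) := by
  simpa using tendsto_pow_log_div_mul_add_atTop 1 0 1 one_ne_zero

theorem sum_range_two_mul_neg_one_pow_mul_log_div_self (N : ℕ) :
    ∑ k ∈ range (2 * N), (-1) ^ (k + 1) * (log ↑(k + 1) / ↑(k + 1))
      = log 2 * harmonic N - ∑ k ∈ Ico N (2 * N), log ↑(k + 1) / ↑(k + 1) := by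
  have h_even : 2 * ∑ k ∈ range N, log ↑(2 * (k + 1)) / ↑(2 * (k + 1))
      = log 2 * harmonic N + ∑ k ∈ range N, log ↑(k + 1) / ↑(k + 1) := by
    rw [mul_sum, harmonic, Rat.cast_sum, mul_sum, ← sum_add_distrib]
    refine sum_congr rfl fun k _ => ?_
    rw [Nat.cast_mul, Nat.cast_ofNat, two_mul_log_div_self_two_mul]
    push_cast
    ring
  rw [sum_range_two_mul_neg_one_pow_mul (fun n : ℕ => log (n : ℝ) / n), h_even,
    ← sum_range_add_sum_Ico _ (Nat.le_mul_of_pos_left N two_pos)]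
  ring

theorem tendsto_sum_Ico_log_div_self_sub :
    Tendsto (fun N : ℕ => ∑ k ∈ Ico N (2 * N), log ↑(k + 1) / ↑(k + 1) - log 2 * log N) atTop
      (𝓝 (log 2 ^ 2 / 2)) := by
  have h_err := tendsto_integral_sub_sum_Ico_two_mul log_div_self_antitoneOn
    tendsto_log_div_self_atTop
  rw [← sub_zero (log 2 ^ 2 / 2)]
  refine (h_err.const_sub _).congr' ?_
  filter_upwards [eventually_gt_atTop 0] with N hN
  have hN' : (0 : ℝ) < N := Nat.cast_pos.2 hN
  rw [integral_log_div_self hN' (by positivity), Nat.cast_mul, Nat.cast_ofNat,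
    log_mul two_ne_zero hN'.ne']
  ring

/-- The alternating series `∑_{k=1}^∞ (-1)^k ln k / k` converges to
`γ ln 2 - (1/2)(ln 2)²`, where `γ` is the Euler–Mascheroni constant. -/
theorem alt_log_div_self_sum :
    Tendsto (fun N => ∑ k ∈ Finset.range N,
        (-1 : ℝ) ^ (k + 1) * Real.log ((k + 1 : ℕ) : ℝ) / ((k + 1 : ℕ) : ℝ))
      atTop
      (nhds (Real.eulerMascheroniConstant * Real.log 2 - (1 / 2) * (Real.log 2) ^ 2)) := by
  simp_rw [mul_div_assoc]
  have h_even : Tendsto (fun N => ∑ k ∈ range (2 * N), (-1 : ℝ) ^ (k + 1) *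
      (log ↑(k + 1) / ↑(k + 1))) atTop
      (𝓝 (eulerMascheroniConstant * log 2 - 1 / 2 * log 2 ^ 2)) := by
    rw [show eulerMascheroniConstant * log 2 - 1 / 2 * log 2 ^ 2
        = log 2 * eulerMascheroniConstant - log 2 ^ 2 / 2 by ring]
    refine ((tendsto_harmonic_sub_log.const_mul (log 2)).sub
      tendsto_sum_Ico_log_div_self_sub).congr fun N => ?_
    rw [sum_range_two_mul_neg_one_pow_mul_log_div_self]
    ring
  have h_odd_term : Tendsto (fun N : ℕ => (-1 : ℝ) ^ (2 * N + 1) *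
      (log ↑(2 * N + 1) / ↑(2 * N + 1))) atTop (𝓝 0) := by
    have h := tendsto_log_div_self_atTop.comp
      (tendsto_natCast_atTop_atTop.comp (tendsto_add_atTop_nat 1))
    simpa [pow_succ, pow_mul] using (h.comp (tendsto_id.const_mul_atTop' two_pos)).neg
  refine tendsto_of_tendsto_two_mul_of_tendsto_two_mul_add_one h_even ?_
  simpa [sum_range_succ] using h_even.add h_odd_term
end

section
/- If η'(s) denotes the sum of the convergent series ∑_{k=1}^∞ (-1)^k · ln(k)/k^s for real s > 0, then exp(2·η'(s)) equals the infinite product ∏_{n=1}^∞ [ (2n)^{1/(2n)^s} · (2n)^{1/(2n)^s} / ( (2n-1)^{1/(2n-1)^s} · (2n+1)^{1/(2n+1)^s} ) ]. -/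
/-!
Writing `f x = log x / x ^ s`, the `n`-th factor is `exp (2 f(2n) - f(2n-1) - f(2n+1))`, so the
`N`-th partial product is the exponential of a sum of second differences, which regroups as
`2 ∑_{k=1}^{2N} (-1)^k f k + f 1 - f (2N+1)`. Since `f 1 = 0` and `f x → 0`, it tends to `exp (2 η')`.
-/

open Real Filter Finset

lemma sum_range_second_diff_eq_alternating_sum {R : Type*} [CommRing R] (a : ℕ → R) (N : ℕ) :
    ∑ n ∈ range N, (2 * a (2 * n + 2) - a (2 * n + 1) - a (2 * n + 3)) =
      2 * ∑ k ∈ range (2 * N), (-1) ^ (k + 1) * a (k + 1) + a 1 - a (2 * N + 1) := by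
  induction N with
  | zero => simp
  | succ N ih =>
    have hodd : (-1 : R) ^ (2 * N + 1) = -1 := Odd.neg_one_pow ⟨N, rfl⟩
    have heven : (-1 : R) ^ (2 * N + 1 + 1) = 1 := Even.neg_one_pow ⟨N + 1, by ring⟩
    rw [sum_range_succ, ih, show 2 * (N + 1) = 2 * N + 1 + 1 by ring, sum_range_succ,
      sum_range_succ, hodd, heven]
    ring_nf

lemma rpow_one_div_rpow_self {x : ℝ} (hx : 0 < x) (s : ℝ) :
    x ^ (1 / x ^ s) = exp (log x / x ^ s) := by
  rw [rpow_def_of_pos hx, mul_one_div]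

lemma rpow_ratio_eq_exp {x : ℝ} (hx : 1 < x) (s : ℝ) :
    x ^ (1 / x ^ s) * x ^ (1 / x ^ s) /
        ((x - 1) ^ (1 / (x - 1) ^ s) * (x + 1) ^ (1 / (x + 1) ^ s)) =
      exp (2 * (log x / x ^ s) - log (x - 1) / (x - 1) ^ s - log (x + 1) / (x + 1) ^ s) := by
  rw [rpow_one_div_rpow_self (by linarith), rpow_one_div_rpow_self (by linarith),
    rpow_one_div_rpow_self (by linarith), ← exp_add, ← exp_add, ← exp_sub]
  ring_nf

lemma tendsto_log_div_rpow_natCast_atTop {s : ℝ} (hs : 0 < s) :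
    Tendsto (fun k : ℕ => log k / (k : ℝ) ^ s) atTop (nhds 0) :=
  (isLittleO_log_rpow_atTop hs).tendsto_div_nhds_zero.comp tendsto_natCast_atTop_atTop

/-- If `η'(s)` is the sum of the convergent series `∑_{k=1}^∞ (-1)^k ln k / k^s` (`s > 0`),
then `exp (2 η'(s))` equals the infinite product
`∏_{n=1}^∞ (2n)^{1/(2n)^s} (2n)^{1/(2n)^s} / ((2n-1)^{1/(2n-1)^s} (2n+1)^{1/(2n+1)^s})`. -/
theorem exp_two_eta_deriv_eq_product (s : ℝ) (hs : 0 < s) (η' : ℝ)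
    (hη' : Tendsto (fun N => ∑ k ∈ Finset.range N,
        (-1 : ℝ) ^ (k + 1) * Real.log ((k + 1 : ℕ) : ℝ) / ((k + 1 : ℕ) : ℝ) ^ s)
      atTop (nhds η')) :
    Tendsto (fun N => ∏ n ∈ Finset.range N,
        ((2 * (n + 1 : ℕ) : ℝ) ^ (1 / (2 * (n + 1 : ℕ) : ℝ) ^ s) *
          (2 * (n + 1 : ℕ) : ℝ) ^ (1 / (2 * (n + 1 : ℕ) : ℝ) ^ s) /
            ((2 * (n + 1 : ℕ) - 1 : ℝ) ^ (1 / (2 * (n + 1 : ℕ) - 1 : ℝ) ^ s) *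
              (2 * (n + 1 : ℕ) + 1 : ℝ) ^ (1 / (2 * (n + 1 : ℕ) + 1 : ℝ) ^ s))))
      atTop (nhds (Real.exp (2 * η'))) := by
  set a : ℕ → ℝ := fun k => log k / (k : ℝ) ^ s with ha
  have hpartial (N : ℕ) : ∏ n ∈ range N,
        ((2 * (n + 1 : ℕ) : ℝ) ^ (1 / (2 * (n + 1 : ℕ) : ℝ) ^ s) *
          (2 * (n + 1 : ℕ) : ℝ) ^ (1 / (2 * (n + 1 : ℕ) : ℝ) ^ s) /
            ((2 * (n + 1 : ℕ) - 1 : ℝ) ^ (1 / (2 * (n + 1 : ℕ) - 1 : ℝ) ^ s) *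
              (2 * (n + 1 : ℕ) + 1 : ℝ) ^ (1 / (2 * (n + 1 : ℕ) + 1 : ℝ) ^ s))) =
      exp (2 * ∑ k ∈ range (2 * N), (-1) ^ (k + 1) * a (k + 1) + a 1 - a (2 * N + 1)) := by
    rw [← sum_range_second_diff_eq_alternating_sum, exp_sum]
    refine prod_congr rfl fun n _ => ?_
    rw [rpow_ratio_eq_exp (by push_cast; linarith) s]
    simp only [ha]
    push_cast
    ring_nf
  have hdouble : Tendsto (fun N : ℕ => 2 * N) atTop atTop :=
    tendsto_id.const_mul_atTop' two_pos
  have hlim : Tendsto (fun N => 2 * ∑ k ∈ range (2 * N), (-1) ^ (k + 1) * a (k + 1)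
      + a 1 - a (2 * N + 1)) atTop (nhds (2 * η')) := by
    have hsum := hη'.comp hdouble
    have htail := (tendsto_log_div_rpow_natCast_atTop hs).comp
      ((tendsto_add_atTop_nat 1).comp hdouble)
    simpa [ha, mul_div_assoc] using ((hsum.const_mul 2).add_const (a 1)).sub htail
  simpa only [hpartial, Function.comp_def] using (continuous_exp.tendsto _).comp hlim
end

section
/- The limit lim_{n→∞} H(n) / ( n^{n²/2 + n/2 + 1/12} · e^{-n²/4} ) exists and is a positive real number (the Glaisher–Kinkelin constant A). -/
open Real Filter Finset

/-! Writing `H(n) / (n^{n²/2 + n/2 + 1/12} e^{-n²/4}) = exp (g n)`, the increments of `g` are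
`(2n+1)/4 - (n²/2 + n/2 + 1/12) log (1 + 1/n)`. Expanding the logarithm to third order, the
constant `1/12` is exactly what cancels the `1/n` term, so the increments are `O(1/n²)`.
Hence `g` is Cauchy, converges to some `L`, and the ratio tends to `exp L > 0`. -/

lemma abs_log_one_add_sub_cubic_le {t : ℝ} (ht : |t| < 1) :
    |log (1 + t) - (t - t ^ 2 / 2 + t ^ 3 / 3)| ≤ |t| ^ 4 / (1 - |t|) := by
  have h := abs_log_sub_add_sum_range_le (x := -t) (by rwa [abs_neg]) 3
  simp only [sum_range_succ, sum_range_zero, abs_neg, sub_neg_eq_add] at h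
  convert h using 2
  push_cast
  ring

lemma abs_quarter_sub_mul_log_one_add_inv_le {x : ℝ} (hx : 2 ≤ x) :
    |(2 * x + 1) / 4 - (x ^ 2 / 2 + x / 2 + 1 / 12) * log (1 + x⁻¹)| ≤ 3 / x ^ 2 := by
  have hx0 : 0 < x := by linarith
  set t := x⁻¹ with ht
  set c := x ^ 2 / 2 + x / 2 + 1 / 12
  have ht0 : 0 < t := inv_pos.mpr hx0
  have ht_le : t ≤ 1 / 2 := by rw [ht, one_div]; exact inv_anti₀ (by norm_num) hx
  have hc0 : 0 < c := by positivity
  have hcx : c ≤ x ^ 2 := by simp only [c]; nlinarith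
  have hlog := abs_log_one_add_sub_cubic_le (t := t) (by rw [abs_of_pos ht0]; linarith)
  rw [abs_of_pos ht0] at hlog
  set p := t - t ^ 2 / 2 + t ^ 3 / 3
  have hcubic : (2 * x + 1) / 4 - c * p = -(1 / (8 * x ^ 2) + 1 / (36 * x ^ 3)) := by
    simp only [p, c, ht]; field_simp; ring
  have hremainder : |c * (log (1 + t) - p)| ≤ 2 / x ^ 2 := by
    calc |c * (log (1 + t) - p)|
        ≤ c * (t ^ 4 / (1 - t)) := by
          rw [abs_mul, abs_of_pos hc0]; exact mul_le_mul_of_nonneg_left hlog hc0.le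
      _ ≤ x ^ 2 * (2 * t ^ 4) := by
          refine mul_le_mul hcx ?_ (div_nonneg (by positivity) (by linarith)) (by positivity)
          rw [div_le_iff₀ (by linarith)]; nlinarith [pow_pos ht0 4]
      _ = 2 / x ^ 2 := by rw [ht]; field_simp
  have hx3 : 1 / (36 * x ^ 3) ≤ 7 / (8 * x ^ 2) := by
    rw [div_le_div_iff₀ (by positivity) (by positivity)]; nlinarith [pow_pos hx0 2]
  calc |(2 * x + 1) / 4 - c * log (1 + t)|
      = |-(1 / (8 * x ^ 2) + 1 / (36 * x ^ 3)) - c * (log (1 + t) - p)| := by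
        rw [← hcubic]; ring_nf
    _ ≤ (1 / (8 * x ^ 2) + 1 / (36 * x ^ 3)) + 2 / x ^ 2 := by
        refine (abs_sub _ _).trans (add_le_add ?_ hremainder)
        rw [abs_neg, abs_of_pos (by positivity)]
    _ ≤ 3 / x ^ 2 := by
        have : 1 / (8 * x ^ 2) + 7 / (8 * x ^ 2) + 2 / x ^ 2 = 3 / x ^ 2 := by field_simp; ring
        linarith

lemma cauchySeq_of_dist_succ_le_div_sq {α : Type*} [PseudoMetricSpace α] {f : ℕ → α}
    {C : ℝ}
    (h : ∀ᶠ n in atTop, dist (f n) (f (n + 1)) ≤ C / (n : ℝ) ^ 2) : CauchySeq f := by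
  refine cauchySeq_of_summable_dist (.of_norm_bounded_eventually_nat
    ((summable_one_div_nat_pow.mpr one_lt_two).mul_left C) ?_)
  filter_upwards [h] with n hn
  rwa [Real.norm_of_nonneg dist_nonneg, mul_one_div]

lemma prod_natCast_rpow_self_eq_exp_sum (s : Finset ℕ) :
    ∏ k ∈ s, (k : ℝ) ^ (k : ℝ) = exp (∑ k ∈ s, (k : ℝ) * log k) := by
  rw [exp_sum]
  refine prod_congr rfl fun k _ => ?_
  rcases k.eq_zero_or_pos with rfl | hk
  · simp
  · rw [rpow_def_of_pos (Nat.cast_pos.mpr hk), mul_comm]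

noncomputable def logGlaisherSeq (n : ℕ) : ℝ :=
  ∑ k ∈ Icc 1 n, (k : ℝ) * log k - ((n : ℝ) ^ 2 / 2 + n / 2 + 1 / 12) * log n
    + (n : ℝ) ^ 2 / 4

lemma exp_logGlaisherSeq {n : ℕ} (hn : n ≠ 0) :
    exp (logGlaisherSeq n) = (∏ k ∈ Icc 1 n, (k : ℝ) ^ (k : ℝ)) /
      ((n : ℝ) ^ ((n : ℝ) ^ 2 / 2 + (n : ℝ) / 2 + 1 / 12) * exp (-(n : ℝ) ^ 2 / 4)) := by
  rw [prod_natCast_rpow_self_eq_exp_sum,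
    rpow_def_of_pos (Nat.cast_pos.mpr (Nat.pos_of_ne_zero hn)), ← exp_add, ← exp_sub,
    logGlaisherSeq]
  congr 1
  ring

lemma logGlaisherSeq_succ_sub {n : ℕ} (hn : n ≠ 0) :
    logGlaisherSeq (n + 1) - logGlaisherSeq n =
      (2 * n + 1) / 4 - ((n : ℝ) ^ 2 / 2 + n / 2 + 1 / 12) * log (1 + (n : ℝ)⁻¹) := by
  have hn0 : (n : ℝ) ≠ 0 := Nat.cast_ne_zero.mpr hn
  have hlog : log ((n : ℝ) + 1) = log n + log (1 + (n : ℝ)⁻¹) := by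
    rw [← log_mul hn0 (by positivity), mul_add, mul_inv_cancel₀ hn0, mul_one]
  simp only [logGlaisherSeq, sum_Icc_succ_top (Nat.le_add_left 1 n), Nat.cast_add, Nat.cast_one,
    hlog]
  ring

lemma cauchySeq_logGlaisherSeq : CauchySeq logGlaisherSeq := by
  refine cauchySeq_of_dist_succ_le_div_sq (C := 3) ?_
  filter_upwards [eventually_ge_atTop 2] with n hn
  rw [dist_comm, Real.dist_eq, logGlaisherSeq_succ_sub (by omega)]
  exact abs_quarter_sub_mul_log_one_add_inv_le (by exact_mod_cast hn)

/-- The limit `lim_{n→∞} H(n) / (n^{n²/2 + n/2 + 1/12} e^{-n²/4})`, where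
`H(n) = ∏_{k=1}^n k^k` is the hyperfactorial, exists and is a positive real number
(the Glaisher–Kinkelin constant `A`). -/
theorem glaisher_kinkelin_limit_exists :
    ∃ A : ℝ, 0 < A ∧
      Tendsto (fun n : ℕ =>
          (∏ k ∈ Finset.Icc 1 n, (k : ℝ) ^ (k : ℝ)) /
            ((n : ℝ) ^ ((n : ℝ) ^ 2 / 2 + (n : ℝ) / 2 + 1 / 12) *
              Real.exp (-(n : ℝ) ^ 2 / 4)))
        atTop (nhds A) := by
  obtain ⟨L, hL⟩ := cauchySeq_tendsto_of_complete cauchySeq_logGlaisherSeq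
  refine ⟨exp L, exp_pos L, ((continuous_exp.tendsto L).comp hL).congr' ?_⟩
  filter_upwards [eventually_ne_atTop 0] with n hn
  exact exp_logGlaisherSeq hn
end

section
/- If the series ∑_{k=1}^∞ (-1)^k·ln(k)/k² converges to (π²/12)·ln( 4πe^γ / A^{12} ), then the infinite product ∏_{n=1}^∞ [ (2n)^{2/(2n)²} / ( (2n-1)^{1/(2n-1)²} · (2n+1)^{1/(2n+1)²} ) ] converges and equals ( 4πe^γ / A^{12} )^{π²/6}. -/
/-!
Put `a k = log k / k²`, `S N = ∑_{k<N} (-1)^(k+1) a (k+1)` and `C = 4πe^γ / A¹²`. The logarithm of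
the `n`-th factor is `2 a(2n) - a(2n-1) - a(2n+1)`; these telescope, so the logarithm of the `N`-th
partial product is `2 S(2N+1) + a(2N+1)`, which tends to `2 L` with `L = (π²/12) log C`.
Exponentiating gives `C^(π²/6)` provided `C > 0`. Since `C ≥ 0` and `log 0 = 0`, this only needs
`L ≠ 0`: `a` decreases from `k = 2` on, so `S(2m+1)` increases and `L ≥ S 3 = a 2 - a 3 > 0`.
-/

open Real Filter Finset Topology

theorem tendsto_two_mul_add_one_atTop : Tendsto (fun m : ℕ ↦ 2 * m + 1) atTop atTop :=
  tendsto_atTop_mono (fun m ↦ show m ≤ 2 * m + 1 by omega) tendsto_id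

noncomputable def alternatingPartialSum (f : ℕ → ℝ) (N : ℕ) : ℝ :=
  ∑ k ∈ range N, (-1) ^ (k + 1) * f (k + 1)

namespace alternatingPartialSum

variable (f : ℕ → ℝ)

theorem two_mul_add_three (m : ℕ) :
    alternatingPartialSum f (2 * m + 3) =
      alternatingPartialSum f (2 * m + 1) + f (2 * m + 2) - f (2 * m + 3) := by
  have hodd : (-1 : ℝ) ^ (2 * m + 3) = -1 := Odd.neg_one_pow ⟨m + 1, by ring⟩
  have heven : (-1 : ℝ) ^ (2 * m + 2) = 1 := Even.neg_one_pow ⟨m + 1, by ring⟩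
  simp only [alternatingPartialSum, sum_range_succ, hodd, heven]
  ring

theorem sum_two_mul_sub_eq (N : ℕ) :
    ∑ n ∈ range N, (2 * f (2 * n + 2) - f (2 * n + 1) - f (2 * n + 3)) =
      2 * alternatingPartialSum f (2 * N + 1) + f (2 * N + 1) + f 1 := by
  induction N with
  | zero =>
    simp only [alternatingPartialSum, sum_range_zero, mul_zero, zero_add, sum_range_one]
    ring
  | succ N ih =>
    rw [sum_range_succ, ih, show 2 * (N + 1) + 1 = 2 * N + 3 by ring, two_mul_add_three]
    ring

theorem monotone_two_mul_add_one (hf : AntitoneOn f (Set.Ici 2)) :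
    Monotone fun m ↦ alternatingPartialSum f (2 * m + 1) := by
  refine monotone_nat_of_le_succ fun m ↦ ?_
  have hstep : f (2 * m + 3) ≤ f (2 * m + 2) :=
    hf (by simp) (by simp only [Set.mem_Ici]; omega) (by omega)
  rw [show 2 * (m + 1) + 1 = 2 * m + 3 by ring, two_mul_add_three]
  linarith

end alternatingPartialSum

noncomputable def logDivSq (k : ℕ) : ℝ := log k / (k : ℝ) ^ 2

theorem logDivSq_one : logDivSq 1 = 0 := by simp [logDivSq]

theorem antitoneOn_logDivSq : AntitoneOn logDivSq (Set.Ici 2) := by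
  have hexp : exp (2 : ℝ)⁻¹ ≤ 2 := by
    have hsq : exp (2 : ℝ)⁻¹ * exp (2 : ℝ)⁻¹ = exp 1 := by rw [← exp_add]; norm_num
    nlinarith [exp_pos (2 : ℝ)⁻¹, exp_one_lt_d9]
  intro j hj k hk hjk
  have hj' : exp (2 : ℝ)⁻¹ ≤ (j : ℝ) := hexp.trans (by exact_mod_cast hj)
  have hk' : exp (2 : ℝ)⁻¹ ≤ (k : ℝ) := hexp.trans (by exact_mod_cast hk)
  simpa only [logDivSq, rpow_two] using
    log_div_self_rpow_antitoneOn two_pos hj' hk' (by exact_mod_cast hjk)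

theorem tendsto_logDivSq_atTop : Tendsto logDivSq atTop (𝓝 0) := by
  have h := (isLittleO_log_rpow_atTop two_pos).tendsto_div_nhds_zero
  simp only [rpow_two] at h
  exact h.comp tendsto_natCast_atTop_atTop

theorem alternatingPartialSum_logDivSq_three_pos : 0 < alternatingPartialSum logDivSq 3 := by
  have h : Real.log 3 * 4 < Real.log 2 * 9 := by
    have := log_lt_log (by norm_num) (show (3 : ℝ) ^ 4 < 2 ^ 9 by norm_num)
    rwa [log_pow, log_pow, Nat.cast_ofNat, Nat.cast_ofNat, mul_comm, mul_comm _ (Real.log 2)]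
      at this
  have hS : alternatingPartialSum logDivSq 3 = Real.log 2 / 4 - Real.log 3 / 9 := by
    simp only [alternatingPartialSum, sum_range_succ, range_zero, sum_empty, logDivSq]
    norm_num
    ring
  rw [hS]
  linarith

theorem pos_of_tendsto_alternatingPartialSum_logDivSq {L : ℝ}
    (hL : Tendsto (alternatingPartialSum logDivSq) atTop (𝓝 L)) : 0 < L :=
  alternatingPartialSum_logDivSq_three_pos.trans_le <|
    (alternatingPartialSum.monotone_two_mul_add_one _ antitoneOn_logDivSq).ge_of_tendsto
      (hL.comp tendsto_two_mul_add_one_atTop) 1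

theorem factor_eq_exp_logDivSq (n : ℕ) :
    (2 * (n + 1 : ℕ) : ℝ) ^ (2 / (2 * (n + 1 : ℕ) : ℝ) ^ 2) /
        ((2 * (n + 1 : ℕ) - 1 : ℝ) ^ ((1 : ℝ) / (2 * (n + 1 : ℕ) - 1 : ℝ) ^ 2) *
          (2 * (n + 1 : ℕ) + 1 : ℝ) ^ ((1 : ℝ) / (2 * (n + 1 : ℕ) + 1 : ℝ) ^ 2)) =
      exp (2 * logDivSq (2 * n + 2) - logDivSq (2 * n + 1) - logDivSq (2 * n + 3)) := by
  have h₁ : (0 : ℝ) < 2 * (n + 1 : ℕ) - 1 := by push_cast; linarith [n.cast_nonneg (α := ℝ)]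
  rw [rpow_def_of_pos (by positivity), rpow_def_of_pos h₁, rpow_def_of_pos (by positivity),
    ← exp_add, ← exp_sub]
  simp only [logDivSq]
  push_cast
  ring_nf

/-- If `∑_{k=1}^∞ (-1)^k ln k / k²` converges to `(π²/12) ln (4 π e^γ / A^12)`, then
`∏_{n=1}^∞ (2n)^{2/(2n)²} / ((2n-1)^{1/(2n-1)²} (2n+1)^{1/(2n+1)²})` converges and equals
`(4 π e^γ / A^12)^{π²/6}`, where `A` is the Glaisher–Kinkelin constant and `γ` the
Euler–Mascheroni constant. -/
theorem product_eta_two (A : ℝ)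
    (h : Tendsto (fun N => ∑ k ∈ Finset.range N,
        (-1 : ℝ) ^ (k + 1) * Real.log ((k + 1 : ℕ) : ℝ) / ((k + 1 : ℕ) : ℝ) ^ 2)
      atTop (nhds ((Real.pi ^ 2 / 12) *
        Real.log (4 * Real.pi * Real.exp Real.eulerMascheroniConstant / A ^ 12)))) :
    Tendsto (fun N => ∏ n ∈ Finset.range N,
        ((2 * (n + 1 : ℕ) : ℝ) ^ (2 / (2 * (n + 1 : ℕ) : ℝ) ^ 2) /
          ((2 * (n + 1 : ℕ) - 1 : ℝ) ^ ((1 : ℝ) / (2 * (n + 1 : ℕ) - 1 : ℝ) ^ 2) *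
            (2 * (n + 1 : ℕ) + 1 : ℝ) ^ ((1 : ℝ) / (2 * (n + 1 : ℕ) + 1 : ℝ) ^ 2))))
      atTop (nhds ((4 * Real.pi * Real.exp Real.eulerMascheroniConstant / A ^ 12) ^
        (Real.pi ^ 2 / 6))) := by
  set C := 4 * Real.pi * Real.exp Real.eulerMascheroniConstant / A ^ 12
  have hS : Tendsto (alternatingPartialSum logDivSq) atTop (𝓝 (π ^ 2 / 12 * log C)) :=
    h.congr fun N ↦ sum_congr rfl fun k _ ↦ mul_div_assoc _ _ _
  have hC : 0 < C := by
    have hlog : log C ≠ 0 := fun h0 ↦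
      (pos_of_tendsto_alternatingPartialSum_logDivSq hS).ne' (by rw [h0, mul_zero])
    exact (by positivity : 0 ≤ C).lt_of_ne fun h0 ↦ hlog (by rw [← h0, log_zero])
  have hprod (N : ℕ) : ∏ n ∈ range N,
      ((2 * (n + 1 : ℕ) : ℝ) ^ (2 / (2 * (n + 1 : ℕ) : ℝ) ^ 2) /
        ((2 * (n + 1 : ℕ) - 1 : ℝ) ^ ((1 : ℝ) / (2 * (n + 1 : ℕ) - 1 : ℝ) ^ 2) *
          (2 * (n + 1 : ℕ) + 1 : ℝ) ^ ((1 : ℝ) / (2 * (n + 1 : ℕ) + 1 : ℝ) ^ 2))) =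
      exp (2 * alternatingPartialSum logDivSq (2 * N + 1) + logDivSq (2 * N + 1)) := by
    rw [prod_congr rfl fun n _ ↦ factor_eq_exp_logDivSq n, ← exp_sum,
      alternatingPartialSum.sum_two_mul_sub_eq, logDivSq_one, add_zero]
  simp only [hprod]
  rw [rpow_def_of_pos hC, show log C * (π ^ 2 / 6) = 2 * (π ^ 2 / 12 * log C) + 0 by ring]
  exact (continuous_exp.tendsto _).comp <|
    ((hS.comp tendsto_two_mul_add_one_atTop).const_mul 2).add
      (tendsto_logDivSq_atTop.comp tendsto_two_mul_add_one_atTop)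
end

section
/- If H(n) = ∏_{k=1}^n k^k is the hyperfactorial, then ln H(n) = ∑_{k=1}^n k·ln k, and ln H(n) - (n²/2 + n/2 + 1/12)·ln n + n²/4 converges as n → ∞ (to ln A, the logarithm of the Glaisher–Kinkelin constant). -/
/-!
The identity is `log (k ^ k) = k log k`, summed over `k`. For the limit, the increment of the
sequence at `x = n` is `(2x+1)/4 - (x²/2 + x/2 + 1/12) log (1 + 1/x)`. Expanding the logarithm to
third order, the terms of order `x`, `1` and `1/x` cancel (the constant `1/12` is chosen to kill
the last of them), so the increments are `O(1/x²)`, hence summable, and the sequence is Cauchy.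
-/

open Real Filter Finset

lemma rpow_self_pos {x : ℝ} (hx : 0 ≤ x) : 0 < x ^ x := by
  rcases hx.eq_or_lt with rfl | hx
  · simp
  · exact Real.rpow_pos_of_pos hx x

lemma log_rpow_self {x : ℝ} (hx : 0 ≤ x) : Real.log (x ^ x) = x * Real.log x := by
  rcases hx.eq_or_lt with rfl | hx
  · simp
  · exact Real.log_rpow hx x

lemma log_prod_rpow_self (s : Finset ℕ) :
    Real.log (∏ k ∈ s, (k : ℝ) ^ (k : ℝ)) = ∑ k ∈ s, (k : ℝ) * Real.log k := by
  rw [Real.log_prod fun k _ => (rpow_self_pos k.cast_nonneg).ne']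
  exact Finset.sum_congr rfl fun k _ => log_rpow_self k.cast_nonneg

lemma cauchySeq_of_abs_sub_le_of_summable {a b : ℕ → ℝ} (N : ℕ) (hb : Summable b)
    (h : ∀ n ≥ N, |a (n + 1) - a n| ≤ b n) : CauchySeq a := by
  rw [← cauchySeq_shift N]
  refine cauchySeq_of_dist_le_of_summable (fun n => b (n + N)) (fun n => ?_)
    ((summable_nat_add_iff N).2 hb)
  rw [dist_comm, Real.dist_eq, Nat.succ_add]
  exact h _ (Nat.le_add_left N n)

lemma abs_log_one_add_inv_sub_le {x : ℝ} (hx : 1 < x) :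
    |Real.log (1 + x⁻¹) - (x⁻¹ - x⁻¹ ^ 2 / 2 + x⁻¹ ^ 3 / 3)| ≤ 1 / (x ^ 3 * (x - 1)) := by
  have hx0 : 0 < x := by linarith
  have hx1 : x - 1 ≠ 0 := by linarith
  have habs : |-x⁻¹| = x⁻¹ := by rw [abs_neg, abs_of_pos (inv_pos.2 hx0)]
  have h := Real.abs_log_sub_add_sum_range_le (x := -x⁻¹)
    (by rw [habs]; exact inv_lt_one_of_one_lt₀ hx) 3
  rw [habs] at h
  convert h using 1
  · simp only [Finset.sum_range_succ, Finset.sum_range_zero, sub_neg_eq_add]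
    congr 1
    push_cast
    ring
  · norm_num
    field_simp

lemma abs_glaisher_increment_le {x : ℝ} (hx : 2 ≤ x) :
    |(2 * x + 1) / 4 - (x ^ 2 / 2 + x / 2 + 1 / 12) * Real.log (1 + x⁻¹)| ≤ 3 / x ^ 2 := by
  obtain ⟨r, hr, hlog⟩ : ∃ r, |r| ≤ 1 / (x ^ 3 * (x - 1)) ∧
      Real.log (1 + x⁻¹) = x⁻¹ - x⁻¹ ^ 2 / 2 + x⁻¹ ^ 3 / 3 + r :=
    ⟨_, abs_log_one_add_inv_sub_le (by linarith), by ring⟩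
  have hx0 : 0 < x := by linarith
  have hx1 : 0 < x - 1 := by linarith
  have hexpand : (2 * x + 1) / 4 - (x ^ 2 / 2 + x / 2 + 1 / 12) * Real.log (1 + x⁻¹) =
      -(1 / (8 * x ^ 2) + 1 / (36 * x ^ 3)) - (x ^ 2 / 2 + x / 2 + 1 / 12) * r := by
    rw [hlog]
    field_simp
    ring
  have hleading : 1 / (8 * x ^ 2) + 1 / (36 * x ^ 3) ≤ 1 / x ^ 2 := by
    rw [div_add_div _ _ (by positivity) (by positivity),
      div_le_div_iff₀ (by positivity) (by positivity)]
    nlinarith [pow_pos hx0 4, pow_pos hx0 5]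
  have hrem : |(x ^ 2 / 2 + x / 2 + 1 / 12) * r| ≤ 2 / x ^ 2 := calc
    _ = (x ^ 2 / 2 + x / 2 + 1 / 12) * |r| := by rw [abs_mul, abs_of_pos (by positivity)]
    _ ≤ x ^ 2 * (1 / (x ^ 3 * (x - 1))) := by gcongr; nlinarith
    _ ≤ 2 / x ^ 2 := by
      rw [mul_one_div, div_le_div_iff₀ (by positivity) (by positivity)]
      nlinarith [pow_pos hx0 4]
  rw [hexpand]
  calc _ ≤ |1 / (8 * x ^ 2) + 1 / (36 * x ^ 3)| + |(x ^ 2 / 2 + x / 2 + 1 / 12) * r| :=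
        (abs_sub _ _).trans_eq (by rw [abs_neg])
    _ ≤ 1 / x ^ 2 + 2 / x ^ 2 := by
      rw [abs_of_pos (by positivity)]
      exact add_le_add hleading hrem
    _ = 3 / x ^ 2 := by ring

noncomputable def glaisherSeq (n : ℕ) : ℝ :=
  ∑ k ∈ Finset.Icc 1 n, (k : ℝ) * Real.log k -
    ((n : ℝ) ^ 2 / 2 + (n : ℝ) / 2 + 1 / 12) * Real.log n + (n : ℝ) ^ 2 / 4

lemma glaisherSeq_succ_sub {n : ℕ} (hn : n ≠ 0) :
    glaisherSeq (n + 1) - glaisherSeq n =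
      (2 * (n : ℝ) + 1) / 4 -
        ((n : ℝ) ^ 2 / 2 + (n : ℝ) / 2 + 1 / 12) * Real.log (1 + (n : ℝ)⁻¹) := by
  have hlog : Real.log (1 + (n : ℝ)⁻¹) = Real.log (n + 1) - Real.log n := by
    rw [← Real.log_div (by positivity) (by positivity), add_div, div_self (by positivity),
      one_div]
  simp only [glaisherSeq, Finset.sum_Icc_succ_top (Nat.le_add_left 1 n), hlog]
  push_cast
  ring

lemma cauchySeq_glaisherSeq : CauchySeq glaisherSeq := by
  refine cauchySeq_of_abs_sub_le_of_summable (b := fun n => 3 / (n : ℝ) ^ 2) 2 ?_ fun n hn => ?_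
  · simpa only [mul_one_div] using (Real.summable_one_div_nat_pow.2 one_lt_two).mul_left 3
  · rw [glaisherSeq_succ_sub (by omega)]
    exact abs_glaisher_increment_le (by exact_mod_cast hn)

/-- If `H(n) = ∏_{k=1}^n k^k` is the hyperfactorial, then
`ln H(n) = ∑_{k=1}^n k ln k`, and `ln H(n) - (n²/2 + n/2 + 1/12) ln n + n²/4`
converges as `n → ∞` (to `ln A`, the logarithm of the Glaisher–Kinkelin constant). -/
theorem log_hyperfactorial :
    (∀ n : ℕ, Real.log (∏ k ∈ Finset.Icc 1 n, (k : ℝ) ^ (k : ℝ)) =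
        ∑ k ∈ Finset.Icc 1 n, (k : ℝ) * Real.log (k : ℝ)) ∧
      ∃ L : ℝ, Tendsto (fun n : ℕ =>
          Real.log (∏ k ∈ Finset.Icc 1 n, (k : ℝ) ^ (k : ℝ)) -
            ((n : ℝ) ^ 2 / 2 + (n : ℝ) / 2 + 1 / 12) * Real.log (n : ℝ) +
            (n : ℝ) ^ 2 / 4)
        atTop (nhds L) := by
  refine ⟨fun n => log_prod_rpow_self _, ?_⟩
  obtain ⟨L, hL⟩ := cauchySeq_tendsto_of_complete cauchySeq_glaisherSeq
  simp only [log_prod_rpow_self]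
  exact ⟨L, hL⟩
end
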